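/- arXiv:2506.16188 — 7 statements merged into one kernel-verified Lean document; each statement's English description precedes it below -/
import Mathlib

section
/- Let C be a triangulated category and 𝒳 an extension-closed full additive subcategory closed under isomorphisms. Suppose f: X_C → C is a right minimal right 𝒳-approximation of an object C, and complete f to a distinguished triangle X_C → C → Y → ΣX_C. Then Hom(X', Y) = 0 for every X' ∈ 𝒳. Consequently, if every object of C admits a right minimal right 𝒳-approximation, then (𝒳, 𝒳^⊥) is a torsion pair in C. -/
open CategoryTheory Category Limits Pretriangulated ZeroObject

variable {C : Type*} [Category C] [Preadditive C] [HasZeroObject C]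
  [HasShift C ℤ] [∀ n : ℤ, (shiftFunctor C n).Additive] [Pretriangulated C]
  [IsTriangulated C] [HasBinaryBiproducts C]

/-- `f : A ⟶ B` is a right `X`-approximation of `B`. -/
def IsRightApprox (X : Set C) {A B : C} (f : A ⟶ B) : Prop :=
  A ∈ X ∧ ∀ A' : C, A' ∈ X → ∀ g : A' ⟶ B, ∃ h : A' ⟶ A, h ≫ f = g

/-- `X` is extension closed: for every distinguished triangle `A ⟶ B ⟶ Z ⟶ ΣA`
with `A, Z ∈ X`, one has `B ∈ X`. -/
def ExtensionClosed (X : Set C) : Prop :=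
  ∀ ⦃A B Z : C⦄ (f : A ⟶ B) (g : B ⟶ Z) (h : Z ⟶ A⟦(1 : ℤ)⟧),
    (Triangle.mk f g h ∈ distTriang C) → A ∈ X → Z ∈ X → B ∈ X

/-- `(X, Y)` is a torsion pair: `Hom(X, Y) = 0` and every object sits in a
distinguished triangle `A ⟶ Z ⟶ B ⟶ ΣA` with `A ∈ X`, `B ∈ Y`. -/
def TorsionPair (X Y : Set C) : Prop :=
  (∀ a ∈ X, ∀ b ∈ Y, ∀ f : a ⟶ b, f = 0) ∧
  ∀ Z : C, ∃ (A B : C) (_ : A ∈ X) (_ : B ∈ Y) (f : A ⟶ Z) (g : Z ⟶ B)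
    (h : B ⟶ A⟦(1 : ℤ)⟧), Triangle.mk f g h ∈ distTriang C

def IsRightMinimal {A B : C} (f : A ⟶ B) : Prop :=
  ∀ e : A ⟶ A, e ≫ f = f → IsIso e

section

omit [IsTriangulated C] [HasBinaryBiproducts C]

namespace IsRightApprox

variable {X : Set C} {A B Y : C} {f : A ⟶ B} {g : B ⟶ Y} {h : Y ⟶ A⟦(1 : ℤ)⟧}

lemma eq_zero_of_comp_mor₃_eq_zero (hf : IsRightApprox X f)
    (hT : Triangle.mk f g h ∈ distTriang C) {X' : C} (hX' : X' ∈ X) (u : X' ⟶ Y)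
    (hu : u ≫ h = 0) : u = 0 := by
  obtain ⟨t, ht⟩ : ∃ t : X' ⟶ B, u = t ≫ g := Triangle.coyoneda_exact₃ _ hT u hu
  obtain ⟨s, rfl⟩ := hf.2 X' hX' t
  have hfg : f ≫ g = 0 := comp_distTriang_mor_zero₁₂ _ hT
  rw [ht, assoc, hfg, comp_zero]

/- Pull the triangle back along `u : X' ⟶ Y`: its middle term `E` is an extension of `X'`
by `A`, so it lies in `X`, and the map `E ⟶ B` extending `f` factors through `f`. Minimality
makes the composite `A ⟶ E ⟶ A` an automorphism, so `A ⟶ E` is a split mono and the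
connecting map `u ≫ h` vanishes. -/
lemma comp_mor₃_eq_zero_of_isRightMinimal (hX : ExtensionClosed X) (hf : IsRightApprox X f)
    (hmin : IsRightMinimal f) (hT : Triangle.mk f g h ∈ distTriang C) {X' : C} (hX' : X' ∈ X)
    (u : X' ⟶ Y) : u ≫ h = 0 := by
  obtain ⟨E, i, p, hT'⟩ := distinguished_cocone_triangle₂ (u ≫ h)
  obtain ⟨v, hv, -⟩ :=
    complete_distinguished_triangle_morphism₂ _ _ hT' hT (𝟙 A) u (by
      change (u ≫ h) ≫ (𝟙 A)⟦(1 : ℤ)⟧' = u ≫ h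
      rw [CategoryTheory.Functor.map_id, comp_id])
  obtain ⟨w, hw⟩ := hf.2 E (hX i p (u ≫ h) hT' hf.1 hX') v
  have : IsIso (i ≫ w) := hmin _ (by rw [assoc, hw]; exact hv.trans (id_comp f))
  have : Mono i := mono_of_mono i w
  exact Triangle.mor₃_eq_zero_of_mono₁ _ hT' this

lemma eq_zero_of_isRightMinimal (hX : ExtensionClosed X) (hf : IsRightApprox X f)
    (hmin : IsRightMinimal f) (hT : Triangle.mk f g h ∈ distTriang C) {X' : C} (hX' : X' ∈ X)
    (u : X' ⟶ Y) : u = 0 :=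
  hf.eq_zero_of_comp_mor₃_eq_zero hT hX' u
    (hf.comp_mor₃_eq_zero_of_isRightMinimal hX hmin hT hX' u)

end IsRightApprox

theorem torsionPair_of_forall_isRightMinimal_approx {X : Set C} (hX : ExtensionClosed X)
    (happrox : ∀ B : C, ∃ (A : C) (f : A ⟶ B), IsRightApprox X f ∧ IsRightMinimal f) :
    TorsionPair X {N : C | ∀ a ∈ X, ∀ f : a ⟶ N, f = 0} := by
  refine ⟨fun a ha N hN => hN a ha, fun B => ?_⟩
  obtain ⟨A, f, hf, hmin⟩ := happrox B
  obtain ⟨Y, g, h, hT⟩ := distinguished_cocone_triangle f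
  exact ⟨A, Y, hf.1, fun X' hX' u => hf.eq_zero_of_isRightMinimal hX hmin hT hX' u, f, g, h, hT⟩

end

theorem stmt1_general (X : Set C)
    (hext : ExtensionClosed X) :
    (∀ (Cobj A Y : C) (f : A ⟶ Cobj) (g : Cobj ⟶ Y) (h : Y ⟶ A⟦(1 : ℤ)⟧),
        IsRightApprox X f → (∀ e : A ⟶ A, e ≫ f = f → IsIso e) →
        (Triangle.mk f g h ∈ distTriang C) →
        ∀ X' ∈ X, ∀ u : X' ⟶ Y, u = 0) ∧
    ((∀ Cobj : C, ∃ (A : C) (f : A ⟶ Cobj), IsRightApprox X f ∧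
        ∀ e : A ⟶ A, e ≫ f = f → IsIso e) →
      TorsionPair X {N : C | ∀ a ∈ X, ∀ f : a ⟶ N, f = 0}) :=
  ⟨fun _ _ _ _ _ _ hf hmin hT _ hX' u => hf.eq_zero_of_isRightMinimal hext hmin hT hX' u,
    torsionPair_of_forall_isRightMinimal_approx hext⟩

/-- Wakamatsu-type lemma: if `f : A ⟶ Cobj` is a right minimal right
`X`-approximation with cone `Y`, then `Hom(X', Y) = 0` for all `X' ∈ X`; consequently,
if every object admits a right minimal right `X`-approximation, then `(X, X^⊥)` is
a torsion pair. -/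
theorem stmt1 (X : Set C)
    (hXiso : ∀ ⦃A B : C⦄, (A ≅ B) → A ∈ X → B ∈ X)
    (hX0 : (0 : C) ∈ X)
    (hXadd : ∀ A B : C, A ∈ X → B ∈ X → (A ⊞ B) ∈ X)
    (hext : ExtensionClosed X) :
    (∀ (Cobj A Y : C) (f : A ⟶ Cobj) (g : Cobj ⟶ Y) (h : Y ⟶ A⟦(1 : ℤ)⟧),
        IsRightApprox X f → (∀ e : A ⟶ A, e ≫ f = f → IsIso e) →
        (Triangle.mk f g h ∈ distTriang C) →
        ∀ X' ∈ X, ∀ u : X' ⟶ Y, u = 0) ∧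
    ((∀ Cobj : C, ∃ (A : C) (f : A ⟶ Cobj), IsRightApprox X f ∧
        ∀ e : A ⟶ A, e ≫ f = f → IsIso e) →
      TorsionPair X {N : C | ∀ a ∈ X, ∀ f : a ⟶ N, f = 0}) :=
  stmt1_general X hext
end

section
/- Let C be a triangulated category and 𝒳 an extension-closed full additive subcategory closed under isomorphisms. Suppose g: C → X^C is a left minimal left 𝒳-approximation of an object C, and complete g to a distinguished triangle Σ⁻¹X^C → W → C → X^C (equivalently, W → C → X^C → ΣW is distinguished). Then Hom(W, X') = 0 for every X' ∈ 𝒳. Consequently, if every object of C admits a left minimal left 𝒳-approximation, then (^⊥𝒳, 𝒳) is a torsion pair in C. -/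
open CategoryTheory Category Limits Pretriangulated ZeroObject

variable {C : Type*} [Category C] [Preadditive C] [HasZeroObject C]
  [HasShift C ℤ] [∀ n : ℤ, (shiftFunctor C n).Additive] [Pretriangulated C]
  [IsTriangulated C] [HasBinaryBiproducts C]

/-- `f : A ⟶ B` is a left `X`-approximation of `A`. -/
def IsLeftApprox (X : Set C) {A B : C} (f : A ⟶ B) : Prop :=
  B ∈ X ∧ ∀ B' : C, B' ∈ X → ∀ g : A ⟶ B', ∃ h : B ⟶ B', f ≫ h = g

def IsLeftMinimal {A B : C} (g : A ⟶ B) : Prop :=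
  ∀ e : B ⟶ B, g ≫ e = g → IsIso e

section

omit [IsTriangulated C] [HasBinaryBiproducts C]

theorem exists_eq_mor₁_comp_of_distTriang (T : Triangle C)
    (hT : T ∈ distTriang C) {Y : C} (f : T.obj₁ ⟶ Y) (hf : T.mor₃ ≫ f⟦(1 : ℤ)⟧' = 0) :
    ∃ g : T.obj₂ ⟶ Y, f = T.mor₁ ≫ g := by
  obtain ⟨v : T.obj₂⟦(1 : ℤ)⟧ ⟶ Y⟦(1 : ℤ)⟧, hv : f⟦(1 : ℤ)⟧' = (-T.mor₁⟦(1 : ℤ)⟧') ≫ v⟩ :=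
    Triangle.yoneda_exact₃ _ (rot_of_distTriang _ hT) _ hf
  refine ⟨-(shiftFunctor C (1 : ℤ)).preimage v, (shiftFunctor C (1 : ℤ)).map_injective ?_⟩
  rw [Functor.map_comp, Functor.map_neg, Functor.map_preimage, Preadditive.comp_neg,
    ← Preadditive.neg_comp, hv]

/-- The extension of `B` by `X'` classified by `φ` lies in `X`, and `g` lifts to it; by
minimality the projection of the extension onto `B` is then a split epimorphism, so the
connecting morphism `φ` vanishes. -/
theorem ExtensionClosed.eq_zero_of_comp_eq_zero {X : Set C} (hext : ExtensionClosed X)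
    {A B X' : C} {g : A ⟶ B} (happ : IsLeftApprox X g) (hmin : IsLeftMinimal g)
    (hX' : X' ∈ X) {φ : B ⟶ X'⟦(1 : ℤ)⟧} (hφ : g ≫ φ = 0) : φ = 0 := by
  obtain ⟨E, i, p, hE⟩ := distinguished_cocone_triangle₂ φ
  obtain ⟨c : A ⟶ E, hc : g = c ≫ p⟩ := Triangle.coyoneda_exact₃ _ hE g hφ
  obtain ⟨s, hs⟩ := happ.2 E (hext i p φ hE hX' happ.1) c
  have : IsIso (s ≫ p) := hmin _ (by rw [← assoc, hs, ← hc])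
  exact Triangle.mor₃_eq_zero_of_epi₂ _ hE (epi_of_epi s p)

theorem ExtensionClosed.hom_eq_zero_of_isLeftMinimal_of_isLeftApprox {X : Set C}
    (hext : ExtensionClosed X) {W A B X' : C} {w : W ⟶ A} {g : A ⟶ B} {h : B ⟶ W⟦(1 : ℤ)⟧}
    (hT : Triangle.mk w g h ∈ distTriang C) (happ : IsLeftApprox X g)
    (hmin : IsLeftMinimal g) (hX' : X' ∈ X) (u : W ⟶ X') : u = 0 := by
  have hwg : w ≫ g = 0 := comp_distTriang_mor_zero₁₂ _ hT
  have hgh : g ≫ h = 0 := comp_distTriang_mor_zero₂₃ _ hT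
  have hφ : h ≫ u⟦(1 : ℤ)⟧' = 0 :=
    hext.eq_zero_of_comp_eq_zero happ hmin hX' (by rw [← assoc, hgh, zero_comp])
  obtain ⟨v, rfl : u = w ≫ v⟩ := exists_eq_mor₁_comp_of_distTriang _ hT u hφ
  obtain ⟨t, rfl⟩ := happ.2 X' hX' v
  rw [← assoc, hwg, zero_comp]

end

theorem stmt2_general (X : Set C)
    (hext : ExtensionClosed X) :
    (∀ (Cobj B W : C) (w : W ⟶ Cobj) (g : Cobj ⟶ B) (h : B ⟶ W⟦(1 : ℤ)⟧),
        IsLeftApprox X g → (∀ e : B ⟶ B, g ≫ e = g → IsIso e) →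
        (Triangle.mk w g h ∈ distTriang C) →
        ∀ X' ∈ X, ∀ u : W ⟶ X', u = 0) ∧
    ((∀ Cobj : C, ∃ (B : C) (g : Cobj ⟶ B), IsLeftApprox X g ∧
        ∀ e : B ⟶ B, g ≫ e = g → IsIso e) →
      TorsionPair {M : C | ∀ a ∈ X, ∀ f : M ⟶ a, f = 0} X) := by
  refine ⟨fun _ _ _ _ _ _ happ hmin hT _ hX' u =>
    hext.hom_eq_zero_of_isLeftMinimal_of_isLeftApprox hT happ hmin hX' u, fun hall => ?_⟩
  refine ⟨fun _ hM _ hY f => hM _ hY f, fun Z => ?_⟩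
  obtain ⟨B, g, happ, hmin⟩ := hall Z
  obtain ⟨W, w, h, hT⟩ := distinguished_cocone_triangle₁ g
  exact ⟨W, B, fun _ hY u => hext.hom_eq_zero_of_isLeftMinimal_of_isLeftApprox hT happ hmin hY u,
    happ.1, w, g, h, hT⟩

/-- dual Wakamatsu-type lemma: if `g : Cobj ⟶ B` is a left minimal left
`X`-approximation and `W ⟶ Cobj ⟶ B ⟶ ΣW` is distinguished, then `Hom(W, X') = 0` for
all `X' ∈ X`; consequently, if every object admits a left minimal left `X`-approximation,
then `(^⊥X, X)` is a torsion pair. -/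
theorem stmt2 (X : Set C)
    (hXiso : ∀ ⦃A B : C⦄, (A ≅ B) → A ∈ X → B ∈ X)
    (hX0 : (0 : C) ∈ X)
    (hXadd : ∀ A B : C, A ∈ X → B ∈ X → (A ⊞ B) ∈ X)
    (hext : ExtensionClosed X) :
    (∀ (Cobj B W : C) (w : W ⟶ Cobj) (g : Cobj ⟶ B) (h : B ⟶ W⟦(1 : ℤ)⟧),
        IsLeftApprox X g → (∀ e : B ⟶ B, g ≫ e = g → IsIso e) →
        (Triangle.mk w g h ∈ distTriang C) →
        ∀ X' ∈ X, ∀ u : W ⟶ X', u = 0) ∧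
    ((∀ Cobj : C, ∃ (B : C) (g : Cobj ⟶ B), IsLeftApprox X g ∧
        ∀ e : B ⟶ B, g ≫ e = g → IsIso e) →
      TorsionPair {M : C | ∀ a ∈ X, ∀ f : M ⟶ a, f = 0} X) :=
  stmt2_general X hext
end

section
/- Let C be a triangulated category, n ≥ 1, and 𝒟 a functorially finite (n+1)-rigid subcategory satisfying ⋂_{k=1}^{n} {}^{⊥_k}𝒟 = ⋂_{k=1}^{n} 𝒟^{⊥_k}; denote this common subcategory by Z. Then: (1) Z is extension-closed in C, i.e., for every distinguished triangle A → B → C → ΣA with A, C ∈ Z one has B ∈ Z; (2) (Z, Z) is a 𝒟-mutation pair, i.e., for every U ∈ Z there exists a distinguished triangle U →f D →g V → ΣU with D ∈ 𝒟 and V ∈ Z such that f is a left 𝒟-approximation of U and g is a right 𝒟-approximation of V, and dually, for every V ∈ Z there exists such a distinguished triangle with U ∈ Z. -/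
/-! Everything follows from the long exact `Hom`-sequences of distinguished triangles.
Extension closure of `Z` is exactness of `Hom(-, Σᵏ d)` at the middle term. For `U ∈ Z`,
complete a left `𝒟`-approximation `U → d` to a triangle `U → d → V → ΣU`. A map `V → Σᵏ d'`
kills `d` by rigidity, so it factors through `ΣU`; for `k = 1` it then vanishes because every
`U → d'` factors through `d`, and for `k ≥ 2` because `Hom(ΣU, Σᵏ d') ≅ Hom(U, Σᵏ⁻¹ d') = 0`.
Moreover `d → V` is a right approximation since `Hom(d', ΣU) = 0`, which is where
`⋂ ⊥ₖ𝒟 = ⋂ 𝒟⊥ₖ` is used. The second half of the mutation pair is dual. -/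

open CategoryTheory Category Limits Pretriangulated ZeroObject

variable {C : Type*} [Category C] [Preadditive C] [HasZeroObject C]
  [HasShift C ℤ] [∀ n : ℤ, (shiftFunctor C n).Additive] [Pretriangulated C]
  [IsTriangulated C]

def ContravariantlyFinite (X : Set C) : Prop :=
  ∀ Z : C, ∃ (A : C) (f : A ⟶ Z), IsRightApprox X f

def CovariantlyFinite (X : Set C) : Prop :=
  ∀ Z : C, ∃ (B : C) (f : Z ⟶ B), IsLeftApprox X f

/-- `D` is `(n+1)`-rigid: `Hom(D, Σ^k D') = 0` for all `D, D' ∈ D` and `1 ≤ k ≤ n`. -/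
def IsRigid (n : ℕ) (D : Set C) : Prop :=
  ∀ d ∈ D, ∀ d' ∈ D, ∀ k : ℕ, 1 ≤ k → k ≤ n → ∀ f : d ⟶ d'⟦(k : ℤ)⟧, f = 0

/-- `⋂_{k=1}^{n} {}^{⊥_k} D`. -/
def leftPerpInter (D : Set C) (n : ℕ) : Set C :=
  {M : C | ∀ k : ℕ, 1 ≤ k → k ≤ n → ∀ d ∈ D, ∀ f : M ⟶ d⟦(k : ℤ)⟧, f = 0}

/-- `⋂_{k=1}^{n} D^{⊥_k}`. -/
def rightPerpInter (D : Set C) (n : ℕ) : Set C :=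
  {N : C | ∀ k : ℕ, 1 ≤ k → k ≤ n → ∀ d ∈ D, ∀ f : d ⟶ N⟦(k : ℤ)⟧, f = 0}

section

variable {𝒞 : Type*} [Category 𝒞] [Preadditive 𝒞] [HasShift 𝒞 ℤ]
  [∀ n : ℤ, (shiftFunctor 𝒞 n).Additive]

lemma eq_zero_of_forall_eq_zero_shift {X Y : 𝒞} {a b c : ℤ} (hab : a + c = b)
    (h : ∀ f : X ⟶ Y⟦a⟧, f = 0) (f : X⟦c⟧ ⟶ Y⟦b⟧) : f = 0 := by
  obtain ⟨g, hg⟩ := (shiftFunctor 𝒞 c).map_surjective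
    (f ≫ (shiftFunctorAdd' 𝒞 a c b hab).hom.app Y)
  rw [h g, Functor.map_zero] at hg
  simpa using hg.symm

variable [HasZeroObject 𝒞] [Pretriangulated 𝒞]

lemma CategoryTheory.Pretriangulated.yoneda_exact₁ (T : Triangle 𝒞)
    (hT : T ∈ distTriang 𝒞) {X : 𝒞} (u : T.obj₁ ⟶ X) (hu : T.mor₃ ≫ u⟦(1 : ℤ)⟧' = 0) :
    ∃ w : T.obj₂ ⟶ X, u = T.mor₁ ≫ w := by
  obtain ⟨χ, hχ⟩ :=
    Triangle.yoneda_exact₂ _ (rot_of_distTriang _ (rot_of_distTriang _ hT)) _ hu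
  obtain ⟨w, rfl⟩ : ∃ w : T.obj₂ ⟶ X, w⟦(1 : ℤ)⟧' = χ := Functor.map_surjective _ χ
  refine ⟨-w, (shiftFunctor 𝒞 (1 : ℤ)).map_injective ?_⟩
  rw [Functor.map_comp, Functor.map_neg, Preadditive.comp_neg]
  exact hχ.trans (Preadditive.neg_comp _ _)

lemma CategoryTheory.Pretriangulated.coyoneda_exact₁_shift (T : Triangle 𝒞)
    (hT : T ∈ distTriang 𝒞) (n₀ n₁ : ℤ) (h : n₀ + 1 = n₁) {X : 𝒞} (x : X ⟶ T.obj₁⟦n₁⟧)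
    (hx : x ≫ T.mor₁⟦n₁⟧' = 0) :
    ∃ y : X ⟶ T.obj₃⟦n₀⟧,
      x = y ≫ T.mor₃⟦n₀⟧' ≫ (shiftFunctorAdd' 𝒞 1 n₀ n₁ (by omega)).inv.app _ := by
  have := (preadditiveCoyoneda.obj (Opposite.op X)).homologySequence_exact₁ T hT n₀ n₁ h
  rw [ShortComplex.ab_exact_iff] at this
  obtain ⟨y, hy⟩ := this x hx
  exact ⟨y, hy.symm.trans (preadditiveCoyoneda_homologySequenceδ_apply T n₀ n₁ h y)⟩

variable {D : Set 𝒞} {n : ℕ} (T : Triangle 𝒞) (hT : T ∈ distTriang 𝒞)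
include hT

lemma mem_leftPerpInter_obj₂ (h₁ : T.obj₁ ∈ leftPerpInter D n)
    (h₃ : T.obj₃ ∈ leftPerpInter D n) : T.obj₂ ∈ leftPerpInter D n := by
  intro k hk₁ hkn d hd φ
  obtain ⟨ψ, rfl⟩ := T.yoneda_exact₂ hT φ (h₁ k hk₁ hkn d hd _)
  rw [h₃ k hk₁ hkn d hd ψ, comp_zero]

lemma mem_leftPerpInter_obj₃_of_isLeftApprox (hrigid : IsRigid n D)
    (h₁ : T.obj₁ ∈ leftPerpInter D n) (hf : IsLeftApprox D T.mor₁) :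
    T.obj₃ ∈ leftPerpInter D n := by
  intro k hk₁ hkn d hd φ
  obtain ⟨ψ, rfl⟩ := T.yoneda_exact₃ hT φ (hrigid _ hf.1 d hd k hk₁ hkn _)
  obtain rfl | hk := eq_or_lt_of_le hk₁
  · obtain ⟨u, rfl⟩ : ∃ u : T.obj₁ ⟶ d, u⟦(1 : ℤ)⟧' = ψ := Functor.map_surjective _ ψ
    obtain ⟨w, rfl⟩ := hf.2 d hd u
    rw [Functor.map_comp, comp_distTriang_mor_zero₃₁_assoc _ hT, zero_comp]
  · rw [eq_zero_of_forall_eq_zero_shift (a := ((k - 1 : ℕ) : ℤ)) (c := 1) (by omega)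
      (h₁ (k - 1) (by omega) (by omega) d hd) ψ, comp_zero]

lemma mem_rightPerpInter_obj₁_of_isRightApprox (hrigid : IsRigid n D)
    (h₃ : T.obj₃ ∈ rightPerpInter D n) (hg : IsRightApprox D T.mor₂) :
    T.obj₁ ∈ rightPerpInter D n := by
  intro k hk₁ hkn d hd a
  have ha : a ≫ T.mor₁⟦(k : ℤ)⟧' = 0 := hrigid d hd _ hg.1 k hk₁ hkn _
  obtain rfl | hk := eq_or_lt_of_le hk₁
  · obtain ⟨b, rfl⟩ := T.coyoneda_exact₁ hT a ha
    obtain ⟨c, rfl⟩ := hg.2 d hd b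
    rw [assoc, comp_distTriang_mor_zero₂₃ _ hT, comp_zero]
  · obtain ⟨y, rfl⟩ := coyoneda_exact₁_shift T hT (k - 1 : ℕ) k (by omega) a ha
    rw [h₃ (k - 1) (by omega) (by omega) d hd y, zero_comp]

lemma isRightApprox_mor₂ (hn : 1 ≤ n) (hd : T.obj₂ ∈ D) (h₁ : T.obj₁ ∈ rightPerpInter D n) :
    IsRightApprox D T.mor₂ := by
  refine ⟨hd, fun d hd' a => ?_⟩
  obtain ⟨b, hb⟩ := T.coyoneda_exact₃ hT a (h₁ 1 le_rfl hn d hd' _)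
  exact ⟨b, hb.symm⟩

lemma isLeftApprox_mor₁ (hn : 1 ≤ n) (hd : T.obj₂ ∈ D) (h₃ : T.obj₃ ∈ leftPerpInter D n) :
    IsLeftApprox D T.mor₁ := by
  refine ⟨hd, fun d hd' u => ?_⟩
  obtain ⟨w, hw⟩ := yoneda_exact₁ T hT u (h₃ 1 le_rfl hn d hd' _)
  exact ⟨w, hw.symm⟩

end

/-- for a functorially finite `(n+1)`-rigid subcategory `D` with
`⋂ₖ {}^{⊥ₖ}D = ⋂ₖ D^{⊥ₖ} =: Z`, the subcategory `Z` is extension closed and `(Z, Z)`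
is a `D`-mutation pair. -/
theorem stmt4 (n : ℕ) (hn : 1 ≤ n) (D : Set C)
    (hcontra : ContravariantlyFinite D) (hcov : CovariantlyFinite D)
    (hrigid : IsRigid n D)
    (hZ : leftPerpInter D n = rightPerpInter D n) :
    (∀ ⦃A B Z : C⦄ (f : A ⟶ B) (g : B ⟶ Z) (h : Z ⟶ A⟦(1 : ℤ)⟧),
        (Triangle.mk f g h ∈ distTriang C) →
        A ∈ leftPerpInter D n → Z ∈ leftPerpInter D n → B ∈ leftPerpInter D n) ∧
    (∀ U ∈ leftPerpInter D n, ∃ (d V : C) (_ : d ∈ D) (_ : V ∈ leftPerpInter D n)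
        (f : U ⟶ d) (g : d ⟶ V) (h : V ⟶ U⟦(1 : ℤ)⟧),
        (Triangle.mk f g h ∈ distTriang C) ∧ IsLeftApprox D f ∧ IsRightApprox D g) ∧
    (∀ V ∈ leftPerpInter D n, ∃ (U d : C) (_ : U ∈ leftPerpInter D n) (_ : d ∈ D)
        (f : U ⟶ d) (g : d ⟶ V) (h : V ⟶ U⟦(1 : ℤ)⟧),
        (Triangle.mk f g h ∈ distTriang C) ∧ IsLeftApprox D f ∧ IsRightApprox D g) := by
  refine ⟨fun _ _ _ f g h hT => mem_leftPerpInter_obj₂ (Triangle.mk f g h) hT, ?_, ?_⟩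
  · intro U hU
    obtain ⟨d, f, hf⟩ := hcov U
    obtain ⟨V, g, h, hT⟩ := distinguished_cocone_triangle f
    have hV := mem_leftPerpInter_obj₃_of_isLeftApprox _ hT hrigid hU hf
    exact ⟨d, V, hf.1, hV, f, g, h, hT, hf,
      isRightApprox_mor₂ _ hT hn hf.1 (hZ ▸ hU)⟩
  · intro V hV
    obtain ⟨d, g, hg⟩ := hcontra V
    obtain ⟨U, f, h, hT⟩ := distinguished_cocone_triangle₁ g
    have hU := mem_rightPerpInter_obj₁_of_isRightApprox _ hT hrigid (hZ ▸ hV) hg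
    exact ⟨U, d, hZ ▸ hU, hg.1, f, g, h, hT,
      isLeftApprox_mor₁ _ hT hn hg.1 hV, hg⟩
end

section
/- Let C be a triangulated category, n ≥ 1, and 𝒟 a functorially finite (n+1)-rigid subcategory satisfying ⋂_{k=1}^{n} {}^{⊥_k}𝒟 = ⋂_{k=1}^{n} 𝒟^{⊥_k}; denote this common subcategory by Z. Let X, Y ∈ Z, set Y⟨0⟩ := Y, and suppose given distinguished triangles Y⟨i−1⟩ →f_i D_i →g_i Y⟨i⟩ → ΣY⟨i−1⟩ for i = 1, …, n, where D_i ∈ 𝒟, f_i is a left 𝒟-approximation of Y⟨i−1⟩ and g_i is a right 𝒟-approximation of Y⟨i⟩. Then for every 1 ≤ i ≤ n there is an isomorphism of abelian groups Hom(X, Y⟨i⟩)/[𝒟](X, Y⟨i⟩) ≅ Hom(X, Σ^i Y). -/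
/-!
Apply `Hom(X, -)` to the triangles `Y⟨i-1⟩ → Dᵢ → Y⟨i⟩ → ΣY⟨i-1⟩`. Since `X` lies in
`⊥_k 𝒟` for `1 ≤ k ≤ n`, the groups `Hom(X, Σᵏ Dᵢ)` vanish, so the long exact sequences give
dimension-shifting isomorphisms `Hom(X, Σᵏ Y⟨i⟩) ≅ Hom(X, Σᵏ⁺¹ Y⟨i-1⟩)` for `k ≥ 1`; chaining
them yields `Hom(X, ΣY⟨i-1⟩) ≅ Hom(X, Σⁱ Y)`. In degree `0` the map
`Hom(X, Y⟨i⟩) → Hom(X, ΣY⟨i-1⟩)` is onto, and its kernel consists of the maps factoring through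
`gᵢ`, which are exactly the maps factoring through `𝒟` because `gᵢ` is a right
`𝒟`-approximation.
-/

open CategoryTheory Category Limits Pretriangulated ZeroObject

variable {C : Type*} [Category C] [Preadditive C] [HasZeroObject C]
  [HasShift C ℤ] [∀ n : ℤ, (shiftFunctor C n).Additive] [Pretriangulated C]
  [IsTriangulated C]

section

variable {C : Type*} [Category C] [Preadditive C]

def Preadditive.rightCompAddEquiv (X : C) {A B : C} (e : A ≅ B) : (X ⟶ A) ≃+ (X ⟶ B) where
  toFun u := u ≫ e.hom
  invFun v := v ≫ e.inv
  left_inv u := by simp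
  right_inv v := by simp
  map_add' u v := Preadditive.add_comp _ _ _ _ _ _

end

section

variable {C : Type*} [Category C] [Preadditive C] [HasZeroObject C] [HasShift C ℤ]
  [∀ n : ℤ, (shiftFunctor C n).Additive] [Pretriangulated C]

variable {T : Triangle C} (X : C)

lemma Triangle.rightComp_mor₃_surjective (hT : T ∈ distTriang C)
    (h₂ : ∀ w : X ⟶ T.obj₂⟦(1 : ℤ)⟧, w = 0) :
    Function.Surjective (Preadditive.rightComp X T.mor₃) := fun v ↦
  let ⟨u, hu⟩ := Triangle.coyoneda_exact₁ T hT v (h₂ _)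
  ⟨u, hu.symm⟩

lemma Triangle.rightComp_mor₃_injective (hT : T ∈ distTriang C)
    (h₂ : ∀ w : X ⟶ T.obj₂, w = 0) :
    Function.Injective (Preadditive.rightComp X T.mor₃) := by
  refine (injective_iff_map_eq_zero _).2 fun u hu ↦ ?_
  obtain ⟨w, rfl⟩ := Triangle.coyoneda_exact₃ T hT u hu
  rw [h₂ w, zero_comp]

noncomputable def Triangle.homObj₃AddEquiv (hT : T ∈ distTriang C)
    (h₂ : ∀ w : X ⟶ T.obj₂, w = 0) (h₂' : ∀ w : X ⟶ T.obj₂⟦(1 : ℤ)⟧, w = 0) :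
    (X ⟶ T.obj₃) ≃+ (X ⟶ T.obj₁⟦(1 : ℤ)⟧) :=
  AddEquiv.ofBijective _
    ⟨Triangle.rightComp_mor₃_injective X hT h₂, Triangle.rightComp_mor₃_surjective X hT h₂'⟩

noncomputable def Triangle.homShiftObj₃AddEquiv (hT : T ∈ distTriang C) {a b : ℤ}
    (hab : a + 1 = b) (h₂ : ∀ w : X ⟶ T.obj₂⟦a⟧, w = 0)
    (h₂' : ∀ w : X ⟶ T.obj₂⟦b⟧, w = 0) :
    (X ⟶ T.obj₃⟦a⟧) ≃+ (X ⟶ T.obj₁⟦b⟧) :=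
  (Triangle.homObj₃AddEquiv X (Triangle.shift_distinguished T hT a) h₂ fun _ ↦
      (cancel_mono ((shiftFunctorAdd' C a 1 b hab).inv.app T.obj₂)).1
        ((h₂' _).trans zero_comp.symm)).trans
    (Preadditive.rightCompAddEquiv X ((shiftFunctorAdd' C a 1 b hab).symm.app T.obj₁))

lemma Triangle.comp_mor₃_eq_zero_iff (hT : T ∈ distTriang C) {D : Set C}
    (hg : IsRightApprox D T.mor₂) (u : X ⟶ T.obj₃) :
    u ≫ T.mor₃ = 0 ↔ ∃ (d : C) (_ : d ∈ D) (a : X ⟶ d) (b : d ⟶ T.obj₃), a ≫ b = u := by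
  constructor
  · intro hu
    obtain ⟨w, hw⟩ := Triangle.coyoneda_exact₃ T hT u hu
    exact ⟨T.obj₂, hg.1, w, T.mor₂, hw.symm⟩
  · rintro ⟨d, hd, a, b, rfl⟩
    obtain ⟨c, rfl⟩ := hg.2 d hd b
    simp only [assoc, comp_distTriang_mor_zero₂₃ T hT, comp_zero]

variable {n : ℕ} {D : Set C} {X} {Y Db : ℕ → C} {f : ∀ i, Y i ⟶ Db i}
  {g : ∀ i, Db i ⟶ Y (i + 1)} {h : ∀ i, Y (i + 1) ⟶ (Y i)⟦(1 : ℤ)⟧}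

lemma nonempty_homShift_addEquiv_of_distTriang (hX : X ∈ leftPerpInter D n)
    (hD : ∀ i < n, Db i ∈ D) (htri : ∀ i < n, Triangle.mk (f i) (g i) (h i) ∈ distTriang C)
    (j k m : ℕ) (hjkm : j + k = m) (hk : 1 ≤ k) (hm : m ≤ n) :
    Nonempty ((X ⟶ (Y j)⟦(k : ℤ)⟧) ≃+ (X ⟶ (Y 0)⟦(m : ℤ)⟧)) := by
  induction j generalizing k with
  | zero =>
    obtain rfl : k = m := by omega
    exact ⟨AddEquiv.refl _⟩
  | succ j ih =>
    have hj : j < n := by omega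
    have hDb (l : ℕ) (hl : 1 ≤ l) (hln : l ≤ n) (w : X ⟶ (Db j)⟦(l : ℤ)⟧) : w = 0 :=
      hX l hl hln _ (hD j hj) w
    obtain ⟨e⟩ := ih (k + 1) (by omega) (by omega)
    exact ⟨(Triangle.homShiftObj₃AddEquiv X (htri j hj) (Nat.cast_succ k).symm
      (hDb k hk (by omega)) (hDb (k + 1) (by omega) (by omega))).trans e⟩

end

theorem stmt5_general (n : ℕ) (D : Set C)
    (X : C) (hX : X ∈ leftPerpInter D n)
    (Yb : ℕ → C)
    (Db : ℕ → C) (f : ∀ i : ℕ, Yb i ⟶ Db i) (g : ∀ i : ℕ, Db i ⟶ Yb (i + 1))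
    (h : ∀ i : ℕ, Yb (i + 1) ⟶ (Yb i)⟦(1 : ℤ)⟧)
    (htri : ∀ i < n, Triangle.mk (f i) (g i) (h i) ∈ distTriang C)
    (hg : ∀ i < n, IsRightApprox D (g i)) :
    ∀ i : ℕ, 1 ≤ i → i ≤ n →
      ∃ φ : (X ⟶ Yb i) →+ (X ⟶ (Yb 0)⟦(i : ℤ)⟧),
        Function.Surjective φ ∧
        ∀ u : X ⟶ Yb i,
          φ u = 0 ↔ ∃ (d : C) (_ : d ∈ D) (a : X ⟶ d) (b : d ⟶ Yb i), a ≫ b = u := by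
  intro i hi hin
  obtain ⟨j, rfl⟩ : ∃ j, i = j + 1 := ⟨i - 1, by omega⟩
  have hj : j < n := by omega
  have hD (i : ℕ) (hi : i < n) : Db i ∈ D := (hg i hi).1
  obtain ⟨e⟩ := nonempty_homShift_addEquiv_of_distTriang hX hD htri j 1 (j + 1) rfl le_rfl hin
  have hα : Function.Surjective (Preadditive.rightComp X (h j)) :=
    Triangle.rightComp_mor₃_surjective X (htri j hj) (hX 1 le_rfl (by omega) _ (hD j hj))
  refine ⟨e.toAddMonoidHom.comp (Preadditive.rightComp X (h j)), e.surjective.comp hα,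
    fun u ↦ ?_⟩
  rw [AddMonoidHom.comp_apply, AddEquiv.coe_toAddMonoidHom, EmbeddingLike.map_eq_zero_iff]
  exact Triangle.comp_mor₃_eq_zero_iff X (htri j hj) (hg j hj) u

/-- for `X, Y ∈ Z` and a chain of distinguished triangles
`Y⟨i-1⟩ ⟶ Dᵢ ⟶ Y⟨i⟩ ⟶ ΣY⟨i-1⟩` realizing the shifts in the subfactor category
`Z/D`, there is an isomorphism `Hom(X, Y⟨i⟩)/[D](X, Y⟨i⟩) ≅ Hom(X, Σ^i Y)` for
`1 ≤ i ≤ n`, expressed as a surjective additive map whose kernel is `[D](X, Y⟨i⟩)`. -/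
theorem stmt5 (n : ℕ) (hn : 1 ≤ n) (D : Set C)
    (hcontra : ContravariantlyFinite D) (hcov : CovariantlyFinite D)
    (hrigid : IsRigid n D)
    (hZ : leftPerpInter D n = rightPerpInter D n)
    (X : C) (hX : X ∈ leftPerpInter D n)
    (Yb : ℕ → C) (hY : Yb 0 ∈ leftPerpInter D n)
    (Db : ℕ → C) (f : ∀ i : ℕ, Yb i ⟶ Db i) (g : ∀ i : ℕ, Db i ⟶ Yb (i + 1))
    (h : ∀ i : ℕ, Yb (i + 1) ⟶ (Yb i)⟦(1 : ℤ)⟧)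
    (hDb : ∀ i < n, Db i ∈ D)
    (htri : ∀ i < n, Triangle.mk (f i) (g i) (h i) ∈ distTriang C)
    (hf : ∀ i < n, IsLeftApprox D (f i))
    (hg : ∀ i < n, IsRightApprox D (g i)) :
    ∀ i : ℕ, 1 ≤ i → i ≤ n →
      ∃ φ : (X ⟶ Yb i) →+ (X ⟶ (Yb 0)⟦(i : ℤ)⟧),
        Function.Surjective φ ∧
        ∀ u : X ⟶ Yb i,
          φ u = 0 ↔ ∃ (d : C) (_ : d ∈ D) (a : X ⟶ d) (b : d ⟶ Yb i), a ≫ b = u :=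
  stmt5_general n D X hX Yb Db f g h htri hg
end

section
/- Let C be a triangulated category, n ≥ 1, and 𝒟 a functorially finite (n+1)-rigid subcategory satisfying ⋂_{k=1}^{n} {}^{⊥_k}𝒟 = ⋂_{k=1}^{n} 𝒟^{⊥_k}; denote this common subcategory by Z. Let (𝒳, 𝒴) be an n-cotorsion pair in C with core I(𝒳) = 𝒳 ∩ 𝒴. Then 𝒟 ⊆ I(𝒳) if and only if 𝒟 ⊆ 𝒳 ⊆ Z and 𝒟 ⊆ 𝒴 ⊆ Z. -/
open CategoryTheory Category Limits Pretriangulated ZeroObject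

variable {C : Type*} [Category C] [Preadditive C] [HasZeroObject C]
  [HasShift C ℤ] [∀ n : ℤ, (shiftFunctor C n).Additive] [Pretriangulated C]
  [IsTriangulated C]

/-- `(U, V)` is an `n`-cotorsion pair: `U = ⋂_{k=1}^n {}^{⊥ₖ}V`,
`V = ⋂_{k=1}^n U^{⊥ₖ}`, `U` is contravariantly finite and `V` is covariantly finite. -/
def NCotorsionPair (n : ℕ) (U V : Set C) : Prop :=
  U = {M : C | ∀ k : ℕ, 1 ≤ k → k ≤ n → ∀ v ∈ V, ∀ f : M ⟶ v⟦(k : ℤ)⟧, f = 0} ∧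
  V = {N : C | ∀ k : ℕ, 1 ≤ k → k ≤ n → ∀ u ∈ U, ∀ f : u ⟶ N⟦(k : ℤ)⟧, f = 0} ∧
  ContravariantlyFinite U ∧ CovariantlyFinite V

/-- for an `n`-cotorsion pair `(X, Y)` with core `X ∩ Y`, one has
`D ⊆ X ∩ Y` iff `D ⊆ X ⊆ Z` and `D ⊆ Y ⊆ Z`, where `Z = ⋂ₖ {}^{⊥ₖ}D = ⋂ₖ D^{⊥ₖ}`. -/
theorem stmt6 (n : ℕ) (hn : 1 ≤ n) (D X Y : Set C)
    (hcontra : ContravariantlyFinite D) (hcov : CovariantlyFinite D)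
    (hrigid : IsRigid n D)
    (hZ : leftPerpInter D n = rightPerpInter D n)
    (hXiso : ∀ ⦃A B : C⦄, (A ≅ B) → A ∈ X → B ∈ X)
    (hYiso : ∀ ⦃A B : C⦄, (A ≅ B) → A ∈ Y → B ∈ Y)
    (hXsum : ∀ A B : C, B ∈ X → ∀ (i : A ⟶ B) (r : B ⟶ A), i ≫ r = 𝟙 A → A ∈ X)
    (hYsum : ∀ A B : C, B ∈ Y → ∀ (i : A ⟶ B) (r : B ⟶ A), i ≫ r = 𝟙 A → A ∈ Y)
    (hpair : NCotorsionPair n X Y) :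
    D ⊆ X ∩ Y ↔
      (D ⊆ X ∧ X ⊆ leftPerpInter D n ∧ D ⊆ Y ∧ Y ⊆ leftPerpInter D n) := by
  obtain ⟨hX, hY, -, -⟩ := hpair
  constructor
  · intro h
    refine ⟨fun d hd => (h hd).1, ?_, fun d hd => (h hd).2, ?_⟩
    · intro M hM k hk1 hk2 d hd f
      rw [hX] at hM
      exact hM k hk1 hk2 d (h hd).2 f
    · intro N hN
      rw [hZ]
      intro k hk1 hk2 d hd f
      rw [hY] at hN
      exact hN k hk1 hk2 d (h hd).1 f
  · rintro ⟨h1, -, h3, -⟩ d hd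
    exact ⟨h1 hd, h3 hd⟩
end

section
/- Let C be a triangulated category, n ≥ 1, and 𝒟 a functorially finite (n+1)-rigid subcategory satisfying ⋂_{k=1}^{n} {}^{⊥_k}𝒟 = ⋂_{k=1}^{n} 𝒟^{⊥_k}; denote this common subcategory by Z. Let M ∈ Z and let X →f D →g M → ΣX be a distinguished triangle with D ∈ 𝒟 and g a right 𝒟-approximation of M. Then f is a left 𝒟-approximation of X; consequently M ∈ μ^{-1}_𝒟(μ_𝒟(M)), so the forward and backward 𝒟-mutations are mutually inverse on objects of Z. -/
open CategoryTheory Category Limits Pretriangulated ZeroObject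

variable {C : Type*} [Category C] [Preadditive C] [HasZeroObject C]
  [HasShift C ℤ] [∀ n : ℤ, (shiftFunctor C n).Additive] [Pretriangulated C]
  [IsTriangulated C]

/-- Forward `D`-mutation: objects `M` admitting a distinguished triangle
`A ⟶ d ⟶ M ⟶ ΣA` with `A ∈ X`, `d ∈ D` and `A ⟶ d` a left `D`-approximation. -/
def forwardMut (D X : Set C) : Set C :=
  {M : C | ∃ (A d : C) (_ : A ∈ X) (_ : d ∈ D) (f : A ⟶ d) (g : d ⟶ M)
    (h : M ⟶ A⟦(1 : ℤ)⟧), (Triangle.mk f g h ∈ distTriang C) ∧ IsLeftApprox D f}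

/-- Backward `D`-mutation: objects `M` admitting a distinguished triangle
`M ⟶ d ⟶ B ⟶ ΣM` with `B ∈ Y`, `d ∈ D` and `d ⟶ B` a right `D`-approximation. -/
def backwardMut (D Y : Set C) : Set C :=
  {M : C | ∃ (B d : C) (_ : B ∈ Y) (_ : d ∈ D) (f : M ⟶ d) (g : d ⟶ B)
    (h : B ⟶ M⟦(1 : ℤ)⟧), (Triangle.mk f g h ∈ distTriang C) ∧ IsRightApprox D g}

/-- if `M ∈ Z` and `A ⟶f d ⟶g M ⟶ ΣA` is a distinguished triangle with
`d ∈ D` and `g` a right `D`-approximation of `M`, then `f` is a left `D`-approximation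
of `A`, and consequently `M ∈ μ⁻¹_D(μ_D({M}))`. -/
theorem stmt9 (n : ℕ) (hn : 1 ≤ n) (D : Set C)
    (hcontra : ContravariantlyFinite D) (hcov : CovariantlyFinite D)
    (hrigid : IsRigid n D)
    (hZ : leftPerpInter D n = rightPerpInter D n)
    (M : C) (hM : M ∈ leftPerpInter D n)
    (A d : C) (hd : d ∈ D)
    (f : A ⟶ d) (g : d ⟶ M) (h : M ⟶ A⟦(1 : ℤ)⟧)
    (htri : Triangle.mk f g h ∈ distTriang C)
    (hg : IsRightApprox D g) :
    IsLeftApprox D f ∧ M ∈ forwardMut D (backwardMut D {M}) := by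
  -- any morphism `M⟦-1⟧ ⟶ d'` with `d' ∈ D` vanishes
  have key : ∀ (d' : C), d' ∈ D → ∀ u : (M⟦(-1 : ℤ)⟧ : C) ⟶ d', u = 0 := by
    intro d' hd' u
    have h1 : ((shiftFunctorCompIsoId C (-1 : ℤ) (1 : ℤ) (by norm_num)).inv.app M ≫
        u⟦(1 : ℤ)⟧' : M ⟶ d'⟦(1 : ℤ)⟧) = 0 := by
      have := hM 1 le_rfl hn d' hd'
      exact this _
    have h2 : (u⟦(1 : ℤ)⟧' : (M⟦(-1 : ℤ)⟧ : C)⟦(1 : ℤ)⟧ ⟶ d'⟦(1 : ℤ)⟧) = 0 := by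
      have := congrArg (fun v => (shiftFunctorCompIsoId C (-1 : ℤ) (1 : ℤ)
        (by norm_num)).hom.app M ≫ v) h1
      simpa using this
    exact (shiftFunctor C (1 : ℤ)).map_injective (by simpa using h2)
  have hleft : IsLeftApprox D f := by
    refine ⟨hd, fun d' hd' g' => ?_⟩
    have hT' := inv_rot_of_distTriang _ htri
    have hzero : ((Triangle.mk f g h).invRotate.mor₁ ≫ g' : (M⟦(-1 : ℤ)⟧ : C) ⟶ d') = 0 :=
      key d' hd' _
    obtain ⟨u, hu⟩ := Triangle.yoneda_exact₂ _ hT' g' hzero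
    exact ⟨u, hu.symm⟩
  refine ⟨hleft, ?_⟩
  have hA : A ∈ backwardMut D {M} := ⟨M, d, rfl, hd, f, g, h, htri, hg⟩
  exact ⟨A, d, hA, hd, f, g, h, htri, hleft⟩
end

section
/- Fix an integer n ≥ 1. Let 𝔛 be a set of n-admissible arcs such that 𝔛 = nc(nc 𝔛). Then 𝔛 is a Ptolemy diagram. -/
/-- `(t, u)` is an `n`-admissible arc: `u - t ≥ 2` and `u - t ≡ 1 (mod n)`. -/
def IsAdmissibleArc (n : ℕ) (t u : ℤ) : Prop :=
  2 ≤ u - t ∧ u - t ≡ 1 [ZMOD (n : ℤ)]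

/-- The arcs `(r, s)` and `(t, u)` (each written with the smaller entry first)
cross if `r < t < s < u` or `t < r < u < s`. -/
def Crosses (r s t u : ℤ) : Prop :=
  (r < t ∧ t < s ∧ s < u) ∨ (t < r ∧ r < u ∧ u < s)

/-- `nc X` is the set of `n`-admissible arcs crossing no arc of `X`. -/
def nc (n : ℕ) (X : Set (ℤ × ℤ)) : Set (ℤ × ℤ) :=
  {a : ℤ × ℤ | IsAdmissibleArc n a.1 a.2 ∧ ∀ b ∈ X, ¬ Crosses a.1 a.2 b.1 b.2}

/-- a set `X` of `n`-admissible arcs with `X = nc (nc X)` is a Ptolemy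
diagram: for crossing arcs `(r, s), (t, u) ∈ X`, every pair formed from one endpoint
of each (written with the smaller entry first) which is an `n`-admissible arc lies
in `X`. -/
theorem stmt13 (n : ℕ) (hn : 1 ≤ n) (X : Set (ℤ × ℤ))
    (hadm : ∀ a ∈ X, IsAdmissibleArc n a.1 a.2)
    (hX : X = nc n (nc n X)) :
    ∀ r s t u : ℤ, (r, s) ∈ X → (t, u) ∈ X → Crosses r s t u →
      ∀ a b : ℤ, (a = r ∨ a = s) → (b = t ∨ b = u) →
        IsAdmissibleArc n (min a b) (max a b) → (min a b, max a b) ∈ X := by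
  intro r s t u hrs htu hcross a b ha hb hab
  rw [hX]
  refine ⟨hab, ?_⟩
  rintro ⟨p, q⟩ hpq
  have h1 := hpq.2 (r, s) hrs
  have h2 := hpq.2 (t, u) htu
  simp only [Crosses] at h1 h2 hcross ⊢
  rcases le_total a b with hle | hle
  · rw [min_eq_left hle, max_eq_right hle]
    rcases ha with rfl | rfl <;> rcases hb with rfl | rfl <;> omega
  · rw [min_eq_right hle, max_eq_left hle]
    rcases ha with rfl | rfl <;> rcases hb with rfl | rfl <;> omega
end
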